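/- Let X and Y be finite sequences of points in R^2 with discrete Fréchet distance d_F(X,Y) = d_xy. Let C be a 1D convolution with a 2×3 kernel k (stride 1, padding 1 with zeros), producing scalar sequences C(X) and C(Y) of the same lengths as X and Y. Let S_0 = k_{0,0}+k_{0,1}+k_{0,2} and S_1 = k_{1,0}+k_{1,1}+k_{1,2}, and let Δ be the maximum over all index pairs (i,j) of |Σ_{m=0}^{1} k_{m,0}(δ^y_{m,j} − δ^x_{m,i}) + k_{m,2}(δ^x_{m,i+1} − δ^y_{m,j+1})|, where δ^x_{m,i} = x_{m,i} − x_{m,i−1} is the coordinate-wise forward difference (with boundary differences taken against the zero padding). Then d_F(C(X), C(Y)) ≤ sqrt(S_0^2 + S_1^2) · d_xy + Δ. -/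

import Mathlib

open scoped BigOperators

instance finNonempty {n : ℕ} [NeZero n] : Nonempty (Fin n) :=
  ⟨⟨0, Nat.pos_of_ne_zero (NeZero.ne n)⟩⟩

instance neZeroMulNat {a b : ℕ} [NeZero a] [NeZero b] : NeZero (a * b) :=
  ⟨Nat.mul_ne_zero (NeZero.ne a) (NeZero.ne b)⟩

/-- The last index of `Fin n`. -/
def lastIdx (n : ℕ) [NeZero n] : Fin n :=
  ⟨n - 1, by have := Nat.pos_of_ne_zero (NeZero.ne n); omega⟩

/-- A monotone coupling between the index sets of two finite sequences:
it starts at the pair of first indices, ends at the pair of last indices,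
and each index advances by at most one per step. -/
def IsCoupling {M N : ℕ} [NeZero M] [NeZero N] (L : List (Fin M × Fin N)) : Prop :=
  L.head? = some (0, 0) ∧
  L.getLast? = some (lastIdx M, lastIdx N) ∧
  L.Chain' fun p q =>
    (q.1.val = p.1.val ∨ q.1.val = p.1.val + 1) ∧
    (q.2.val = p.2.val ∨ q.2.val = p.2.val + 1)

/-- The maximum matched distance of a coupling. -/
noncomputable def couplingCost {α : Type*} [PseudoMetricSpace α] {M N : ℕ}
    (x : Fin M → α) (y : Fin N → α) (L : List (Fin M × Fin N)) : ℝ :=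
  (L.map fun p => dist (x p.1) (y p.2)).foldr max 0

/-- The discrete Fréchet distance between two finite sequences. -/
noncomputable def dFrechet {α : Type*} [PseudoMetricSpace α] {M N : ℕ} [NeZero M] [NeZero N]
    (x : Fin M → α) (y : Fin N → α) : ℝ :=
  sInf {r | ∃ L, IsCoupling L ∧ couplingCost x y L = r}

abbrev E2 := EuclideanSpace ℝ (Fin 2)

/-- The trajectory `X` (a `2 × M` matrix) extended by zero padding, coordinate `m`, position `t`. -/
noncomputable def padded {M : ℕ} (X : Fin M → E2) (m : Fin 2) (t : ℤ) : ℝ :=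
  if h : 0 ≤ t ∧ t < (M : ℤ) then X ⟨t.toNat, by omega⟩ m else 0

/-- 1D convolution of a trajectory with a `2 × 3` kernel, stride 1, zero padding 1. -/
noncomputable def conv1 {M : ℕ} (k : Fin 2 → Fin 3 → ℝ) (X : Fin M → E2) : Fin M → ℝ :=
  fun j => ∑ m : Fin 2,
    (k m 0 * padded X m ((j.val : ℤ) - 1) + k m 1 * padded X m (j.val : ℤ) +
      k m 2 * padded X m ((j.val : ℤ) + 1))

/-- Coordinate-wise forward difference `δ^x_{m,i} = x_{m,i} - x_{m,i-1}`,
with boundary differences taken against the zero padding. -/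
noncomputable def deltaP {M : ℕ} (X : Fin M → E2) (m : Fin 2) (i : ℤ) : ℝ :=
  padded X m i - padded X m (i - 1)

/-!
Writing the neighbours `x_{i-1}`, `x_{i+1}` as `x_i` minus resp. plus a forward difference, the
difference `C(X)_i - C(Y)_j` becomes the inner product of the kernel row sums `(S₀, S₁)` with
`x_i - y_j`, plus a boundary term whose absolute value is at most `Δ`. By Cauchy–Schwarz every
matched distance of `C(X)`, `C(Y)` is thus at most `√(S₀² + S₁²)` times the corresponding matched
distance of `X`, `Y`, plus `Δ`; such a pointwise affine bound passes to the cost of every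
coupling, and hence to the discrete Fréchet distance.
-/

section Frechet

variable {α β : Type*} [PseudoMetricSpace α] [PseudoMetricSpace β] {M N : ℕ}

lemma couplingCost_cons (x : Fin M → α) (y : Fin N → α) (p : Fin M × Fin N)
    (L : List (Fin M × Fin N)) :
    couplingCost x y (p :: L) = max (dist (x p.1) (y p.2)) (couplingCost x y L) := rfl

lemma couplingCost_nonneg (x : Fin M → α) (y : Fin N → α) (L : List (Fin M × Fin N)) :
    0 ≤ couplingCost x y L := by
  induction L with
  | nil => exact le_rfl
  | cons p L ih => exact ih.trans (le_max_right _ _)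

lemma couplingCost_le_of_dist_le {x : Fin M → α} {y : Fin N → α} {f : Fin M → β}
    {g : Fin N → β} {a b : ℝ} (ha : 0 ≤ a) (hb : 0 ≤ b) {L : List (Fin M × Fin N)}
    (h : ∀ p ∈ L, dist (f p.1) (g p.2) ≤ a * dist (x p.1) (y p.2) + b) :
    couplingCost f g L ≤ a * couplingCost x y L + b := by
  induction L with
  | nil => simpa [couplingCost] using hb
  | cons p L ih =>
    rw [couplingCost_cons, couplingCost_cons, mul_max_of_nonneg _ _ ha, ← max_add_add_right]
    exact max_le_max (h p List.mem_cons_self) (ih fun q hq => h q (List.mem_cons_of_mem p hq))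

/-- The diagonal walk `t ↦ (min t (M - 1), min t (N - 1))`, `t < max M N`. -/
lemma exists_isCoupling (M N : ℕ) [NeZero M] [NeZero N] :
    ∃ L : List (Fin M × Fin N), IsCoupling L := by
  have hM := Nat.pos_of_ne_zero (NeZero.ne M)
  have hN := Nat.pos_of_ne_zero (NeZero.ne N)
  obtain ⟨n, hn⟩ : ∃ n, max M N = n + 1 := ⟨max M N - 1, by omega⟩
  refine ⟨(List.range (max M N)).map fun t =>
    (⟨min t (M - 1), by omega⟩, ⟨min t (N - 1), by omega⟩), ?_, ?_, ?_⟩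
  · rw [hn, List.range_succ_eq_map]
    simp
  · rw [hn, List.range_succ, List.map_append]
    simp only [List.map_cons, List.map_nil, List.getLast?_concat]
    congr 2 <;> ext <;> simp [lastIdx] <;> omega
  · rw [hn]
    change List.IsChain _ _
    rw [List.isChain_map, List.isChain_range_succ]
    intro t _
    constructor <;> simp <;> omega

lemma dFrechet_le_of_dist_le [NeZero M] [NeZero N] {x : Fin M → α} {y : Fin N → α}
    {f : Fin M → β} {g : Fin N → β} {a b : ℝ} (ha : 0 ≤ a) (hb : 0 ≤ b)
    (h : ∀ i j, dist (f i) (g j) ≤ a * dist (x i) (y j) + b) :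
    dFrechet f g ≤ a * dFrechet x y + b := by
  set S := {r | ∃ L, IsCoupling L ∧ couplingCost x y L = r}
  have hS : S.Nonempty :=
    let ⟨L, hL⟩ := exists_isCoupling M N
    ⟨_, L, hL, rfl⟩
  have hS_bdd : BddBelow S := ⟨0, by rintro _ ⟨L, -, rfl⟩; exact couplingCost_nonneg x y L⟩
  have hT_bdd : BddBelow {r | ∃ L, IsCoupling L ∧ couplingCost f g L = r} :=
    ⟨0, by rintro _ ⟨L, -, rfl⟩; exact couplingCost_nonneg f g L⟩
  have hmono : Monotone fun r => a * r + b := fun r s hrs =>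
    add_le_add_left (mul_le_mul_of_nonneg_left hrs ha) b
  calc dFrechet f g ≤ sInf ((fun r => a * r + b) '' S) := by
        refine le_csInf (hS.image _) ?_
        rintro _ ⟨_, ⟨L, hL, rfl⟩, rfl⟩
        exact (csInf_le hT_bdd ⟨L, hL, rfl⟩).trans
          (couplingCost_le_of_dist_le ha hb fun p _ => h p.1 p.2)
    _ = a * dFrechet x y + b := (hmono.map_csInf_of_continuousAt (by fun_prop) hS hS_bdd).symm

end Frechet

section Convolution

variable {M N : ℕ}

noncomputable def kernelRowSums (k : Fin 2 → Fin 3 → ℝ) : E2 :=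
  WithLp.toLp 2 fun m => k m 0 + k m 1 + k m 2

noncomputable def boundaryTerm (k : Fin 2 → Fin 3 → ℝ) (X : Fin M → E2) (Y : Fin N → E2)
    (i : Fin M) (j : Fin N) : ℝ :=
  ∑ m : Fin 2, (k m 0 * (deltaP Y m (j.val : ℤ) - deltaP X m (i.val : ℤ)) +
    k m 2 * (deltaP X m ((i.val : ℤ) + 1) - deltaP Y m ((j.val : ℤ) + 1)))

lemma padded_natCast (X : Fin M → E2) (m : Fin 2) (i : Fin M) :
    padded X m (i.val : ℤ) = X i m := by
  rw [padded, dif_pos ⟨Int.natCast_nonneg _, by exact_mod_cast i.isLt⟩]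
  simp

lemma norm_kernelRowSums (k : Fin 2 → Fin 3 → ℝ) :
    ‖kernelRowSums k‖ = Real.sqrt ((k 0 0 + k 0 1 + k 0 2) ^ 2 + (k 1 0 + k 1 1 + k 1 2) ^ 2) := by
  simp [EuclideanSpace.norm_eq, kernelRowSums, Fin.sum_univ_two, sq_abs]

lemma conv1_sub_conv1 (k : Fin 2 → Fin 3 → ℝ) (X : Fin M → E2) (Y : Fin N → E2)
    (i : Fin M) (j : Fin N) :
    conv1 k X i - conv1 k Y j =
      inner ℝ (kernelRowSums k) (X i - Y j) + boundaryTerm k X Y i j := by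
  simp only [conv1, boundaryTerm, deltaP, kernelRowSums, PiLp.inner_apply, PiLp.sub_apply,
    RCLike.inner_apply, conj_trivial, Fin.sum_univ_two, add_sub_cancel_right, padded_natCast]
  ring

lemma dist_conv1_le (k : Fin 2 → Fin 3 → ℝ) (X : Fin M → E2) (Y : Fin N → E2)
    (i : Fin M) (j : Fin N) :
    dist (conv1 k X i) (conv1 k Y j) ≤
      ‖kernelRowSums k‖ * dist (X i) (Y j) + |boundaryTerm k X Y i j| := by
  rw [Real.dist_eq, conv1_sub_conv1, dist_eq_norm]
  exact (abs_add_le _ _).trans (add_le_add_left (abs_real_inner_le_norm _ _) _)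

end Convolution

theorem conv1d_upper_bound {M N : ℕ} [NeZero M] [NeZero N]
    (X : Fin M → E2) (Y : Fin N → E2) (k : Fin 2 → Fin 3 → ℝ)
    (dxy S0 S1 Δ : ℝ)
    (hd : dFrechet X Y = dxy)
    (hS0 : S0 = k 0 0 + k 0 1 + k 0 2)
    (hS1 : S1 = k 1 0 + k 1 1 + k 1 2)
    (hΔ : Δ = (Finset.univ : Finset (Fin M × Fin N)).sup' Finset.univ_nonempty fun p =>
      |∑ m : Fin 2, (k m 0 * (deltaP Y m (p.2.val : ℤ) - deltaP X m (p.1.val : ℤ)) +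
        k m 2 * (deltaP X m ((p.1.val : ℤ) + 1) - deltaP Y m ((p.2.val : ℤ) + 1)))|) :
    dFrechet (conv1 k X) (conv1 k Y) ≤ Real.sqrt (S0 ^ 2 + S1 ^ 2) * dxy + Δ := by
  have hΔ_ge (i : Fin M) (j : Fin N) : |boundaryTerm k X Y i j| ≤ Δ :=
    hΔ ▸ Finset.le_sup' (fun p : Fin M × Fin N => |boundaryTerm k X Y p.1 p.2|)
      (Finset.mem_univ (i, j))
  have hΔ_nonneg : 0 ≤ Δ := (abs_nonneg _).trans (hΔ_ge 0 0)
  rw [← hd, hS0, hS1, ← norm_kernelRowSums]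
  exact dFrechet_le_of_dist_le (norm_nonneg _) hΔ_nonneg fun i j =>
    (dist_conv1_le k X Y i j).trans (add_le_add_right (hΔ_ge i j) _)
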